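/- arXiv:1103.0262 — 3 statements merged into one kernel-verified Lean document; each statement's English description precedes it below -/
import Mathlib

section
/- If W is a subalgebra of the algebra of complex V×V matrices that is closed under Hadamard (entrywise) multiplication, closed under conjugate transpose, and contains the identity matrix I and the all-ones matrix J, then W has a basis consisting of 0-1 matrices whose sum is J, and this basis of 0-1 matrices is unique. -/
open Matrix

/-- The all-ones matrix `J`. -/
def allOnes (V : Type*) : Matrix V V ℂ := Matrix.of fun _ _ => (1 : ℂ)

/-- A cellular algebra: a subalgebra of `Matrix V V ℂ` (hence containing `I`) that is
closed under Hadamard (entrywise) product and conjugate transpose, and contains the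
all-ones matrix `J`. -/
def IsCellular {V : Type*} [Fintype V] [DecidableEq V]
    (W : Subalgebra ℂ (Matrix V V ℂ)) : Prop :=
  (∀ A ∈ W, ∀ B ∈ W, A ⊙ B ∈ W) ∧ (∀ A ∈ W, Aᴴ ∈ W) ∧ allOnes V ∈ W

/-- A 0-1 matrix. -/
def Is01 {V : Type*} (M : Matrix V V ℂ) : Prop := ∀ u v, M u v = 0 ∨ M u v = 1

/-- `R` is a basis of `W` consisting of 0-1 matrices, whose sum is the all-ones matrix. -/
def IsStdBasis {V : Type*} [Fintype V] [DecidableEq V]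
    (W : Subalgebra ℂ (Matrix V V ℂ)) (R : Finset (Matrix V V ℂ)) : Prop :=
  (∀ M ∈ R, Is01 M) ∧ (↑R ⊆ (W : Set (Matrix V V ℂ))) ∧
    LinearIndependent ℂ ((↑) : (↑R : Set (Matrix V V ℂ)) → Matrix V V ℂ) ∧
    Submodule.span ℂ (↑R : Set (Matrix V V ℂ)) = Subalgebra.toSubmodule W ∧
    ∑ M ∈ R, M = allOnes V

/-!
Call two positions of `V × V` equivalent when every matrix of `W` takes the same value at
them. The indicators of the equivalence classes lie in `W`: for each position `q` outside the
class of `p`, an affine combination of a separating matrix and `J` is `1` on the class of `p`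
and `0` at `q`, and the Hadamard product of these matrices is the indicator of the class of `p`.
Since every matrix of `W` is constant on the classes, these indicators form a 0-1 basis of `W`
summing to `J`. Conversely, in any 0-1 basis summing to `J` each position is covered by exactly
one basis matrix, so every element of `W` is constant on the support of each basis matrix;
hence each basis matrix is the indicator of a class.
-/

namespace Cellular

variable {V : Type*}

section Partition

variable {R : Finset (Matrix V V ℂ)}

lemma Is01.exists_apply_eq_one {M : Matrix V V ℂ} (h01 : Is01 M) (hM : M ≠ 0) :
    ∃ u v, M u v = 1 := by
  by_contra! h
  exact hM (Matrix.ext fun u v => (h01 u v).resolve_right (h u v))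

lemma sum_apply_eq_one (hsum : ∑ M ∈ R, M = allOnes V) (u v : V) :
    ∑ M ∈ R, M u v = 1 := by
  simpa [Matrix.sum_apply, allOnes] using congrFun (congrFun hsum u) v

lemma exists_mem_apply_eq_one (h01 : ∀ M ∈ R, Is01 M) (hsum : ∑ M ∈ R, M = allOnes V)
    (u v : V) : ∃ M ∈ R, M u v = 1 := by
  obtain ⟨M, hM, hne⟩ := Finset.exists_ne_zero_of_sum_ne_zero
    ((sum_apply_eq_one hsum u v).symm ▸ one_ne_zero : ∑ M ∈ R, M u v ≠ 0)
  exact ⟨M, hM, (h01 M hM u v).resolve_left hne⟩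

lemma apply_eq_zero_of_ne (h01 : ∀ M ∈ R, Is01 M) (hsum : ∑ M ∈ R, M = allOnes V)
    {M N : Matrix V V ℂ} (hM : M ∈ R) (hN : N ∈ R) (hNM : N ≠ M) {u v : V}
    (hMuv : M u v = 1) : N u v = 0 := by
  classical
  have hnonneg : ∀ L ∈ R.erase M, 0 ≤ (L u v).re := fun L hL => by
    rcases h01 L (Finset.mem_of_mem_erase hL) u v with h | h <;> simp [h]
  have hrest : ∑ L ∈ R.erase M, (L u v).re = 0 := by
    have h := congrArg Complex.re (sum_apply_eq_one hsum u v)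
    rw [Complex.re_sum, ← Finset.add_sum_erase R _ hM, hMuv] at h
    simpa using h
  have hN0 := (Finset.sum_eq_zero_iff_of_nonneg hnonneg).1 hrest N (Finset.mem_erase.2 ⟨hNM, hN⟩)
  exact (h01 N hN u v).resolve_right fun h => by simp [h] at hN0

lemma linearIndepOn_of_sum_eq_allOnes (h01 : ∀ M ∈ R, Is01 M)
    (hsum : ∑ M ∈ R, M = allOnes V) (h0 : (0 : Matrix V V ℂ) ∉ R) :
    LinearIndepOn ℂ id (R : Set (Matrix V V ℂ)) := by
  rw [linearIndepOn_finset_iff]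
  intro c hc M hM
  obtain ⟨u, v, hMuv⟩ := Is01.exists_apply_eq_one (h01 M hM) (ne_of_mem_of_not_mem hM h0)
  have h := congrFun (congrFun hc u) v
  rw [Matrix.sum_apply, Finset.sum_eq_single_of_mem M hM] at h
  · simpa [hMuv] using h
  · intro N hN hNM
    simp [apply_eq_zero_of_ne h01 hsum hM hN hNM hMuv]

lemma eq_sum_hadamard (hsum : ∑ M ∈ R, M = allOnes V) (A : Matrix V V ℂ) :
    A = ∑ M ∈ R, A ⊙ M := by
  ext u v
  simp [Matrix.sum_apply, ← Finset.mul_sum, sum_apply_eq_one hsum]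

lemma apply_eq_apply_of_mem_span (h01 : ∀ M ∈ R, Is01 M) (hsum : ∑ M ∈ R, M = allOnes V)
    {A : Matrix V V ℂ} (hA : A ∈ Submodule.span ℂ (R : Set (Matrix V V ℂ)))
    {M : Matrix V V ℂ} (hM : M ∈ R) {u v u' v' : V} (h : M u v = 1) (h' : M u' v' = 1) :
    A u v = A u' v' := by
  induction hA using Submodule.span_induction with
  | mem N hN =>
    by_cases hNM : N = M
    · rw [hNM, h, h']
    · rw [apply_eq_zero_of_ne h01 hsum hM hN hNM h, apply_eq_zero_of_ne h01 hsum hM hN hNM h']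
  | zero => rfl
  | add A B _ _ hA hB => simp [hA, hB]
  | smul c A _ hA => simp [hA]

end Partition

section Cells

variable (W : Submodule ℂ (Matrix V V ℂ))

def SameCell (p q : V × V) : Prop := ∀ M ∈ W, M p.1 p.2 = M q.1 q.2

open Classical in
noncomputable def cellMatrix (p : V × V) : Matrix V V ℂ :=
  of fun u v => if SameCell W p (u, v) then 1 else 0

open Classical in
lemma cellMatrix_apply (p : V × V) (u v : V) :
    cellMatrix W p u v = if SameCell W p (u, v) then 1 else 0 := rfl

lemma cellMatrix_self (p : V × V) : cellMatrix W p p.1 p.2 = 1 := by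
  simp [cellMatrix_apply, SameCell]

lemma is01_cellMatrix (p : V × V) : Is01 (cellMatrix W p) := by
  intro u v
  rw [cellMatrix_apply]
  split_ifs <;> simp

lemma cellMatrix_ne_zero (p : V × V) : cellMatrix W p ≠ 0 := fun h => by
  simpa [h] using cellMatrix_self W p

lemma cellMatrix_eq_iff {p q : V × V} : cellMatrix W p = cellMatrix W q ↔ SameCell W p q := by
  constructor
  · intro h
    by_contra hpq
    have hq := congrFun (congrFun h q.1) q.2
    rw [cellMatrix_self, cellMatrix_apply, if_neg hpq] at hq
    exact zero_ne_one hq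
  · intro hpq
    ext u v
    have : SameCell W p (u, v) ↔ SameCell W q (u, v) :=
      ⟨fun h M hM => (hpq M hM).symm.trans (h M hM), fun h M hM => (hpq M hM).trans (h M hM)⟩
    classical
    rw [cellMatrix_apply, cellMatrix_apply]
    exact if_congr this rfl rfl

lemma cellMatrix_apply_eq_ite (p : V × V) (u v : V)
    [Decidable (cellMatrix W p = cellMatrix W (u, v))] :
    cellMatrix W p u v = if cellMatrix W p = cellMatrix W (u, v) then 1 else 0 := by
  by_cases h : SameCell W p (u, v)
  · rw [if_pos ((cellMatrix_eq_iff W).2 h), cellMatrix_apply, if_pos h]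
  · rw [if_neg (mt (cellMatrix_eq_iff W).1 h), cellMatrix_apply, if_neg h]

lemma hadamard_cellMatrix {A : Matrix V V ℂ} (hA : A ∈ W) (p : V × V) :
    A ⊙ cellMatrix W p = A p.1 p.2 • cellMatrix W p := by
  ext u v
  by_cases h : SameCell W p (u, v)
  · simp [cellMatrix_apply, h, h A hA]
  · simp [cellMatrix_apply, h]

lemma exists_mem_separating (hJ : allOnes V ∈ W) (p q : V × V) :
    ∃ M ∈ W, M p.1 p.2 = 1 ∧ (¬ SameCell W p q → M q.1 q.2 = 0) := by
  by_cases hpq : SameCell W p q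
  · exact ⟨allOnes V, hJ, rfl, absurd hpq⟩
  obtain ⟨M, hM, hne⟩ : ∃ M ∈ W, M p.1 p.2 ≠ M q.1 q.2 := by simpa [SameCell] using hpq
  refine ⟨(M p.1 p.2 - M q.1 q.2)⁻¹ • (M - M q.1 q.2 • allOnes V),
    W.smul_mem _ (W.sub_mem hM (W.smul_mem _ hJ)), ?_, fun _ => ?_⟩
  · simp [allOnes, inv_mul_cancel₀ (sub_ne_zero.2 hne)]
  · simp [allOnes]

lemma finset_hadamard_prod_mem (hmul : ∀ A ∈ W, ∀ B ∈ W, A ⊙ B ∈ W) (hJ : allOnes V ∈ W)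
    {ι : Type*} (s : Finset ι) {g : ι → Matrix V V ℂ} (hg : ∀ i ∈ s, g i ∈ W) :
    (of fun u v => ∏ i ∈ s, g i u v) ∈ W := by
  induction s using Finset.cons_induction with
  | empty => simpa [allOnes] using hJ
  | cons a s ha ih =>
    have hprod : (of fun u v => ∏ i ∈ Finset.cons a s ha, g i u v)
        = g a ⊙ of fun u v => ∏ i ∈ s, g i u v := by
      ext u v
      simp [Finset.prod_cons]
    rw [hprod]
    exact hmul _ (hg a (Finset.mem_cons_self a s))
      _ (ih fun i hi => hg i (Finset.mem_cons_of_mem hi))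

lemma eq_cellMatrix_of_apply_eq_one {R : Finset (Matrix V V ℂ)} (h01 : ∀ M ∈ R, Is01 M)
    (hsum : ∑ M ∈ R, M = allOnes V)
    (hspan : Submodule.span ℂ (R : Set (Matrix V V ℂ)) = W)
    {M : Matrix V V ℂ} (hM : M ∈ R) {p : V × V} (hp : M p.1 p.2 = 1) :
    M = cellMatrix W p := by
  have hMW : M ∈ W := hspan.le (Submodule.subset_span hM)
  ext u v
  rw [cellMatrix_apply]
  split_ifs with h
  · rw [← h M hMW, hp]
  · refine (h01 M hM u v).resolve_right fun h1 => h fun A hA => ?_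
    exact apply_eq_apply_of_mem_span h01 hsum (hspan.ge hA) hM hp h1

variable [Fintype V]

lemma cellMatrix_mem (hmul : ∀ A ∈ W, ∀ B ∈ W, A ⊙ B ∈ W) (hJ : allOnes V ∈ W)
    (p : V × V) : cellMatrix W p ∈ W := by
  choose g hgW hgp hgq using exists_mem_separating W hJ p
  convert finset_hadamard_prod_mem W hmul hJ Finset.univ fun q _ => hgW q
  ext u v
  by_cases h : SameCell W p (u, v)
  · rw [cellMatrix_apply, if_pos h]
    exact (Finset.prod_eq_one fun q _ => (h _ (hgW q)).symm.trans (hgp q)).symm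
  · rw [cellMatrix_apply, if_neg h]
    exact (Finset.prod_eq_zero (Finset.mem_univ (u, v)) (hgq (u, v) h)).symm

open Classical in
noncomputable def cellBasis : Finset (Matrix V V ℂ) :=
  Finset.univ.image (cellMatrix W)

lemma mem_cellBasis {M : Matrix V V ℂ} : M ∈ cellBasis W ↔ ∃ p, cellMatrix W p = M := by
  simp [cellBasis]

lemma is01_of_mem_cellBasis {M : Matrix V V ℂ} (hM : M ∈ cellBasis W) : Is01 M := by
  obtain ⟨p, rfl⟩ := (mem_cellBasis W).1 hM
  exact is01_cellMatrix W p

lemma sum_cellBasis : ∑ M ∈ cellBasis W, M = allOnes V := by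
  classical
  ext u v
  rw [Matrix.sum_apply]
  calc ∑ M ∈ cellBasis W, M u v
      = ∑ M ∈ cellBasis W, if M = cellMatrix W (u, v) then 1 else 0 := by
        refine Finset.sum_congr rfl fun M hM => ?_
        obtain ⟨p, rfl⟩ := (mem_cellBasis W).1 hM
        exact cellMatrix_apply_eq_ite W p u v
    _ = allOnes V u v := by
        simp [Finset.sum_ite_eq', (mem_cellBasis W).2 ⟨(u, v), rfl⟩, allOnes]

lemma zero_notMem_cellBasis : (0 : Matrix V V ℂ) ∉ cellBasis W := fun h => by
  obtain ⟨p, hp⟩ := (mem_cellBasis W).1 h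
  exact cellMatrix_ne_zero W p hp

lemma span_cellBasis (hmul : ∀ A ∈ W, ∀ B ∈ W, A ⊙ B ∈ W) (hJ : allOnes V ∈ W) :
    Submodule.span ℂ (cellBasis W : Set (Matrix V V ℂ)) = W := by
  refine le_antisymm (Submodule.span_le.2 fun M hM => ?_) fun A hA => ?_
  · obtain ⟨p, rfl⟩ := (mem_cellBasis W).1 hM
    exact cellMatrix_mem W hmul hJ p
  · rw [eq_sum_hadamard (sum_cellBasis W) A]
    refine Submodule.sum_mem _ fun M hM => ?_
    obtain ⟨p, rfl⟩ := (mem_cellBasis W).1 hM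
    rw [hadamard_cellMatrix W hA]
    exact Submodule.smul_mem _ _ (Submodule.subset_span hM)

lemma eq_cellBasis {R : Finset (Matrix V V ℂ)} (h01 : ∀ M ∈ R, Is01 M)
    (hsum : ∑ M ∈ R, M = allOnes V) (h0 : (0 : Matrix V V ℂ) ∉ R)
    (hspan : Submodule.span ℂ (R : Set (Matrix V V ℂ)) = W) :
    R = cellBasis W := by
  ext M
  rw [mem_cellBasis]
  constructor
  · intro hM
    obtain ⟨u, v, huv⟩ := Is01.exists_apply_eq_one (h01 M hM) (ne_of_mem_of_not_mem hM h0)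
    exact ⟨(u, v), (eq_cellMatrix_of_apply_eq_one W h01 hsum hspan hM huv).symm⟩
  · rintro ⟨⟨u, v⟩, rfl⟩
    obtain ⟨N, hN, huv⟩ := exists_mem_apply_eq_one h01 hsum u v
    rwa [← eq_cellMatrix_of_apply_eq_one W h01 hsum hspan hN huv]

end Cells

end Cellular

open Cellular

/-- Every cellular algebra has a unique basis of 0-1 matrices; the sum of this basis
is the all-ones matrix `J`. -/
theorem stmt_0 {V : Type*} [Fintype V] [DecidableEq V]
    (W : Subalgebra ℂ (Matrix V V ℂ)) (hW : IsCellular W) :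
    ∃! R : Finset (Matrix V V ℂ), IsStdBasis W R := by
  obtain ⟨hmul, -, hJ⟩ := hW
  let W' := Subalgebra.toSubmodule W
  have hspan : Submodule.span ℂ (cellBasis W' : Set (Matrix V V ℂ)) = W' :=
    span_cellBasis W' hmul hJ
  refine ⟨cellBasis W', ⟨fun M => is01_of_mem_cellBasis W', ?_, ?_, hspan, sum_cellBasis W'⟩, ?_⟩
  · exact fun M hM => hspan.le (Submodule.subset_span hM)
  · exact linearIndepOn_of_sum_eq_allOnes (fun M => is01_of_mem_cellBasis W')
      (sum_cellBasis W') (zero_notMem_cellBasis W')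
  · rintro R ⟨h01, -, hli, hspanR, hsum⟩
    exact eq_cellBasis W' h01 hsum (fun h0 => hli.ne_zero ⟨0, h0⟩ rfl) hspanR
end

section
/- Let φ : W → W′ be a weak isomorphism of cellular algebras. Then for every matrix R ∈ W, the trace of R equals the trace of φ(R). -/
open Matrix

/-- A weak isomorphism between cellular algebras: a bijection from `W` onto `W′`
preserving addition, scalar multiplication, matrix multiplication, Hadamard
multiplication and conjugate transposition. -/
def IsWeakIso {V V2 : Type*} [Fintype V] [DecidableEq V] [Fintype V2] [DecidableEq V2]
    (W : Subalgebra ℂ (Matrix V V ℂ)) (W2 : Subalgebra ℂ (Matrix V2 V2 ℂ))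
    (f : Matrix V V ℂ → Matrix V2 V2 ℂ) : Prop :=
  Set.BijOn f (W : Set (Matrix V V ℂ)) (W2 : Set (Matrix V2 V2 ℂ)) ∧
  (∀ A ∈ W, ∀ B ∈ W, f (A + B) = f A + f B) ∧
  (∀ (c : ℂ), ∀ A ∈ W, f (c • A) = c • f A) ∧
  (∀ A ∈ W, ∀ B ∈ W, f (A * B) = f A * f B) ∧
  (∀ A ∈ W, ∀ B ∈ W, f (A ⊙ B) = f A ⊙ f B) ∧
  (∀ A ∈ W, f Aᴴ = (f A)ᴴ)

/-!
Write `J` for the all-ones matrix. For every square matrix `M`, `J (M ⊙ I) J = tr M • J`, and a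
weak isomorphism `f` sends `I` and `J` to `I` and `J` (they are the identities of the matrix and the
Hadamard product, and `f` is onto). Hence `f (tr R • J) = tr (f R) • J`, while linearity gives
`f (tr R • J) = tr R • J`; comparing coefficients of `J` (or, when the target is empty, using
injectivity of `f` to compare in the source) gives `tr (f R) = tr R`.
-/

lemma hadamard_allOnes {V : Type*} (A : Matrix V V ℂ) : A ⊙ allOnes V = A := by
  ext u v
  simp [allOnes, hadamard]

lemma allOnes_hadamard {V : Type*} (A : Matrix V V ℂ) : allOnes V ⊙ A = A := by
  ext u v
  simp [allOnes, hadamard]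

lemma allOnes_mul_hadamard_one_mul_allOnes {V : Type*} [Fintype V] [DecidableEq V]
    (M : Matrix V V ℂ) : allOnes V * (M ⊙ 1) * allOnes V = M.trace • allOnes V := by
  ext u v
  simp [allOnes, mul_apply, hadamard, trace, one_apply, mul_ite]

lemma smul_allOnes_injective (V : Type*) [Nonempty V] :
    Function.Injective fun c : ℂ => c • allOnes V := by
  intro a b h
  obtain ⟨v⟩ := ‹Nonempty V›
  simpa [allOnes] using congrFun (congrFun h v) v

lemma Set.SurjOn.map_eq_of_isIdentity {α β : Type*} {S : Set α} {T : Set β} {f : α → β}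
    (hf : Set.SurjOn f S T) {opα : α → α → α} {opβ : β → β → β}
    (hmap : ∀ a ∈ S, ∀ b ∈ S, f (opα a b) = opβ (f a) (f b))
    {e : α} (he : e ∈ S) (hleft : ∀ a, opα e a = a)
    {e' : β} (he' : e' ∈ T) (hright : ∀ b, opβ b e' = b) : f e = e' := by
  obtain ⟨a, ha, rfl⟩ := hf he'
  calc f e = opβ (f e) (f a) := (hright _).symm
    _ = f a := by rw [← hmap e he a ha, hleft]

/-- A weak isomorphism of cellular algebras preserves traces. -/
theorem stmt_7 {V V2 : Type*} [Fintype V] [DecidableEq V] [Fintype V2] [DecidableEq V2]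
    (W : Subalgebra ℂ (Matrix V V ℂ)) (W2 : Subalgebra ℂ (Matrix V2 V2 ℂ))
    (hW : IsCellular W) (hW2 : IsCellular W2)
    (f : Matrix V V ℂ → Matrix V2 V2 ℂ) (hf : IsWeakIso W W2 f)
    (R : Matrix V V ℂ) (hRW : R ∈ W) :
    (f R).trace = R.trace := by
  obtain ⟨hbij, -, hsmul, hmul, hhad, -⟩ := hf
  have hJ : allOnes V ∈ W := hW.2.2
  have hR1 : R ⊙ 1 ∈ W := hW.1 R hRW 1 W.one_mem
  have hf1 : f 1 = 1 :=
    hbij.surjOn.map_eq_of_isIdentity hmul W.one_mem one_mul W2.one_mem mul_one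
  have hfJ : f (allOnes V) = allOnes V2 :=
    hbij.surjOn.map_eq_of_isIdentity hhad hJ allOnes_hadamard hW2.2.2 hadamard_allOnes
  have himage : f (R.trace • allOnes V) = (f R).trace • allOnes V2 := by
    rw [← allOnes_mul_hadamard_one_mul_allOnes, hmul _ (W.mul_mem hJ hR1) _ hJ,
      hmul _ hJ _ hR1, hhad R hRW 1 W.one_mem, hf1, hfJ, allOnes_mul_hadamard_one_mul_allOnes]
  have htarget : R.trace • allOnes V2 = (f R).trace • allOnes V2 := by
    rw [← himage, hsmul _ _ hJ, hfJ]
  have hsource : R.trace • allOnes V = (f R).trace • allOnes V :=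
    hbij.injOn (W.smul_mem hJ _) (W.smul_mem hJ _) (by rw [himage, hsmul _ _ hJ, hfJ])
  rcases isEmpty_or_nonempty V with hV | hV
  · rcases isEmpty_or_nonempty V2 with hV2 | hV2
    · simp [trace]
    · exact (smul_allOnes_injective V2 htarget).symm
  · exact (smul_allOnes_injective V hsource).symm
end

section
/- Let G and G′ be graphs with adjacency matrices A and A′, and let φ : [G] → [G′] be a weak isomorphism of their cellular closures with φ(A) = A′ (an equivalence from G to G′). For each degree d, let I_d (resp. I′_d) be the diagonal 0-1 matrix supported on vertices of degree d in G (resp. G′). Then I_d ∈ [G], I′_d ∈ [G′], and φ(I_d) = I′_d. -/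
open Matrix

/-- The diagonal 0-1 matrix supported on the vertices of degree `d` in `G`. -/
def degIndicator {V : Type*} [Fintype V] [DecidableEq V]
    (G : SimpleGraph V) [DecidableRel G.Adj] (d : ℕ) : Matrix V V ℂ :=
  Matrix.of fun u v => if u = v ∧ G.degree u = d then 1 else 0


/-!
The diagonal of `A²` is the degree matrix: `D = (A * A) ⊙ 1`. Hence `D ∈ [G]`, and since `φ`
preserves products, Hadamard products and (by surjectivity) the identity, `φ D = D′`. Take a
polynomial `p` with `p d = 1` and `p e = 0` for every other degree `e` occurring in `G` or `G′`;
then `I_d = p(D)` and `I′_d = p(D′)`. On `[G]` the map `φ` is a unital `ℂ`-algebra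
homomorphism, so `φ (p(D)) = p(φ D) = p(D′)`.
-/

open Polynomial

lemma Polynomial.exists_eval_eq_ite {K : Type*} [Field K] [DecidableEq K] (S : Finset K) (a : K) :
    ∃ p : K[X], ∀ t ∈ S, p.eval t = if t = a then 1 else 0 := by
  refine ⟨Lagrange.basis (insert a S) id a, fun t ht => ?_⟩
  split_ifs with hta
  · subst hta
    exact Lagrange.eval_basis_self (v := id) (Set.injOn_id _) (Finset.mem_insert_self t S)
  · exact Lagrange.eval_basis_of_ne (v := id) (Ne.symm hta) (Finset.mem_insert_of_mem ht)

lemma Matrix.aeval_diagonal {V R : Type*} [Fintype V] [DecidableEq V] [CommSemiring R]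
    (g : V → R) (p : R[X]) :
    aeval (diagonal g) p = diagonal fun u => p.eval (g u) := by
  rw [← diagonalAlgHom_apply (R := R), aeval_algHom_apply, aeval_pi_apply]
  rfl

lemma Subalgebra.aeval_mem {R A : Type*} [CommSemiring R] [Semiring A] [Algebra R A]
    {S : Subalgebra R A} {x : A} (hx : x ∈ S) (p : R[X]) : aeval x p ∈ S := by
  rw [← coe_aeval_mk_apply (p := p) x hx]
  exact SetLike.coe_mem _

namespace SimpleGraph

variable {V : Type*} [Fintype V] [DecidableEq V] (G : SimpleGraph V) [DecidableRel G.Adj]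

lemma degMatrix_eq_adjMatrix_mul_self_hadamard_one (R : Type*) [NonAssocSemiring R] :
    G.degMatrix R = (G.adjMatrix R * G.adjMatrix R) ⊙ 1 := by
  rw [degMatrix, eq_comm, hadamard_one_eq_diagonal_iff]
  exact funext G.adjMatrix_mul_self_apply_self

lemma degIndicator_eq_aeval_degMatrix {d : ℕ} {p : ℂ[X]}
    (hp : ∀ u, p.eval (G.degree u : ℂ) = if G.degree u = d then 1 else 0) :
    degIndicator G d = aeval (G.degMatrix ℂ) p := by
  ext u v
  by_cases huv : u = v
  · subst huv
    simp [degMatrix, Matrix.aeval_diagonal, degIndicator, hp]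
  · simp [degMatrix, Matrix.aeval_diagonal, degIndicator, huv]

lemma degMatrix_mem {W : Subalgebra ℂ (Matrix V V ℂ)} (hW : IsCellular W)
    (hA : G.adjMatrix ℂ ∈ W) : G.degMatrix ℂ ∈ W := by
  rw [degMatrix_eq_adjMatrix_mul_self_hadamard_one]
  exact hW.1 _ (mul_mem hA hA) _ (one_mem W)

end SimpleGraph

namespace IsWeakIso

variable {V V2 : Type*} [Fintype V] [DecidableEq V] [Fintype V2] [DecidableEq V2]
  {W : Subalgebra ℂ (Matrix V V ℂ)} {W2 : Subalgebra ℂ (Matrix V2 V2 ℂ)}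
  {f : Matrix V V ℂ → Matrix V2 V2 ℂ}

lemma map_mem (hf : IsWeakIso W W2 f) {M : Matrix V V ℂ} (hM : M ∈ W) : f M ∈ W2 :=
  hf.1.mapsTo hM

lemma map_add (hf : IsWeakIso W W2 f) {M N : Matrix V V ℂ} (hM : M ∈ W) (hN : N ∈ W) :
    f (M + N) = f M + f N :=
  hf.2.1 M hM N hN

lemma map_smul (hf : IsWeakIso W W2 f) (c : ℂ) {M : Matrix V V ℂ} (hM : M ∈ W) :
    f (c • M) = c • f M :=
  hf.2.2.1 c M hM

lemma map_mul (hf : IsWeakIso W W2 f) {M N : Matrix V V ℂ} (hM : M ∈ W) (hN : N ∈ W) :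
    f (M * N) = f M * f N :=
  hf.2.2.2.1 M hM N hN

lemma map_hadamard (hf : IsWeakIso W W2 f) {M N : Matrix V V ℂ} (hM : M ∈ W) (hN : N ∈ W) :
    f (M ⊙ N) = f M ⊙ f N :=
  hf.2.2.2.2.1 M hM N hN

/-- `f 1` is a right identity on `W2 = f '' W`, hence equal to `1`. -/
lemma map_one (hf : IsWeakIso W W2 f) : f 1 = 1 := by
  obtain ⟨M, hM, hfM⟩ := hf.1.surjOn (one_mem W2)
  have h := hf.map_mul hM (one_mem W)
  rw [mul_one, hfM, one_mul] at h
  exact h.symm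

def toAlgHom (hf : IsWeakIso W W2 f) : W →ₐ[ℂ] W2 where
  toFun M := ⟨f M, hf.map_mem M.2⟩
  map_one' := Subtype.ext hf.map_one
  map_mul' M N := Subtype.ext (hf.map_mul M.2 N.2)
  map_zero' := Subtype.ext (by simpa using hf.map_smul 0 (zero_mem W))
  map_add' M N := Subtype.ext (hf.map_add M.2 N.2)
  commutes' c := Subtype.ext <| by
    simp only [Algebra.algebraMap_eq_smul_one, SetLike.val_smul, OneMemClass.coe_one]
    rw [hf.map_smul c (one_mem W), hf.map_one]

lemma map_aeval (hf : IsWeakIso W W2 f) {M : Matrix V V ℂ} (hM : M ∈ W) (p : ℂ[X]) :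
    f (aeval M p) = aeval (f M) p := by
  have h := congrArg Subtype.val (aeval_algHom_apply hf.toAlgHom (⟨M, hM⟩ : W) p)
  simpa [toAlgHom] using h.symm

lemma map_degMatrix (hf : IsWeakIso W W2 f) {G : SimpleGraph V} [DecidableRel G.Adj]
    {G2 : SimpleGraph V2} [DecidableRel G2.Adj] (hA : G.adjMatrix ℂ ∈ W)
    (hfA : f (G.adjMatrix ℂ) = G2.adjMatrix ℂ) : f (G.degMatrix ℂ) = G2.degMatrix ℂ := by
  rw [G.degMatrix_eq_adjMatrix_mul_self_hadamard_one,
    G2.degMatrix_eq_adjMatrix_mul_self_hadamard_one, hf.map_hadamard (mul_mem hA hA) (one_mem W),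
    hf.map_mul hA hA, hfA, hf.map_one]

end IsWeakIso

theorem stmt_10_general {V V2 : Type*} [Fintype V] [DecidableEq V] [Fintype V2] [DecidableEq V2]
    (G : SimpleGraph V) [DecidableRel G.Adj] (G2 : SimpleGraph V2) [DecidableRel G2.Adj]
    (W : Subalgebra ℂ (Matrix V V ℂ)) (W2 : Subalgebra ℂ (Matrix V2 V2 ℂ))
    (hW : IsCellular W)
    (hA : G.adjMatrix ℂ ∈ W)
    (f : Matrix V V ℂ → Matrix V2 V2 ℂ) (hf : IsWeakIso W W2 f)
    (hfA : f (G.adjMatrix ℂ) = G2.adjMatrix ℂ) (d : ℕ) :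
    degIndicator G d ∈ W ∧ degIndicator G2 d ∈ W2 ∧
      f (degIndicator G d) = degIndicator G2 d := by
  obtain ⟨p, hp⟩ := exists_eval_eq_ite
    (Finset.univ.image (fun u => (G.degree u : ℂ)) ∪
      Finset.univ.image (fun v => (G2.degree v : ℂ))) (d : ℂ)
  have hI : degIndicator G d = aeval (G.degMatrix ℂ) p :=
    G.degIndicator_eq_aeval_degMatrix fun u => by simp [hp]
  have hI2 : degIndicator G2 d = aeval (G2.degMatrix ℂ) p :=
    G2.degIndicator_eq_aeval_degMatrix fun v => by simp [hp]
  have hD := G.degMatrix_mem hW hA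
  have hmem : degIndicator G d ∈ W := hI ▸ Subalgebra.aeval_mem hD p
  have hmap : f (degIndicator G d) = degIndicator G2 d := by
    rw [hI, hI2, hf.map_aeval hD, hf.map_degMatrix hA hfA]
  exact ⟨hmem, hmap ▸ hf.map_mem hmem, hmap⟩

/-- An equivalence from `G` to `G′` maps the diagonal matrix on vertices of degree `d`
in `G` to the diagonal matrix on vertices of degree `d` in `G′`. -/
theorem stmt_10 {V V2 : Type*} [Fintype V] [DecidableEq V] [Fintype V2] [DecidableEq V2]
    (G : SimpleGraph V) [DecidableRel G.Adj] (G2 : SimpleGraph V2) [DecidableRel G2.Adj]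
    (W : Subalgebra ℂ (Matrix V V ℂ)) (W2 : Subalgebra ℂ (Matrix V2 V2 ℂ))
    (hW : IsCellular W) (hW2 : IsCellular W2)
    (hA : G.adjMatrix ℂ ∈ W)
    (hmin : ∀ W' : Subalgebra ℂ (Matrix V V ℂ),
      IsCellular W' → G.adjMatrix ℂ ∈ W' → W ≤ W')
    (hA2 : G2.adjMatrix ℂ ∈ W2)
    (hmin2 : ∀ W' : Subalgebra ℂ (Matrix V2 V2 ℂ),
      IsCellular W' → G2.adjMatrix ℂ ∈ W' → W2 ≤ W')
    (f : Matrix V V ℂ → Matrix V2 V2 ℂ) (hf : IsWeakIso W W2 f)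
    (hfA : f (G.adjMatrix ℂ) = G2.adjMatrix ℂ) (d : ℕ) :
    degIndicator G d ∈ W ∧ degIndicator G2 d ∈ W2 ∧
      f (degIndicator G d) = degIndicator G2 d :=
  stmt_10_general G G2 W W2 hW hA f hf hfA d
end
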